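/- Let Φ be a simply laced, irreducible root system with base Δ and positive roots Φ⁺. Let β, γ ∈ Φ⁺ with γ − β = α₁ + ⋯ + α_t, where each αᵢ ∈ Δ (repetitions allowed) and t ≥ 2. Then there exists an index i ∈ {1, …, t} such that ⟨γ, αᵢ^∨⟩ = 1, the element γ − αᵢ is a positive root, and γ − αᵢ − β is the sum of the remaining simple roots αⱼ with j ≠ i. -/

import Mathlib

open scoped RealInnerProductSpace

/-- A simply laced, irreducible (finite, reduced, crystallographic) root system `Φ`
in a real inner product space, together with a base `Δ` of simple roots. -/
structure IsSimplyLacedIrreducibleRootSystem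
    {V : Type*} [NormedAddCommGroup V] [InnerProductSpace ℝ V]
    (Φ : Set V) (Δ : Finset V) : Prop where
  finite : Φ.Finite
  nonempty : Φ.Nonempty
  ne_zero : ∀ α ∈ Φ, α ≠ 0
  reduced : ∀ α ∈ Φ, ∀ t : ℝ, t • α ∈ Φ → t = 1 ∨ t = -1
  crystallographic : ∀ α ∈ Φ, ∀ β ∈ Φ, ∃ n : ℤ, (n : ℝ) = 2 * ⟪β, α⟫ / ⟪α, α⟫
  reflect_mem : ∀ α ∈ Φ, ∀ β ∈ Φ, β - (2 * ⟪β, α⟫ / ⟪α, α⟫) • α ∈ Φ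
  base_subset : ↑Δ ⊆ Φ
  base_indep : LinearIndependent ℝ (fun a : Δ => (a : V))
  base_pos_or_neg : ∀ β ∈ Φ,
    (∃ m : Multiset V, (∀ a ∈ m, a ∈ Δ) ∧ β = m.sum) ∨
    (∃ m : Multiset V, (∀ a ∈ m, a ∈ Δ) ∧ -β = m.sum)
  simplyLaced : ∀ α ∈ Φ, ∀ β ∈ Φ, ⟪α, α⟫ = ⟪β, β⟫
  irreducible : ∀ A B : Set V, Φ = A ∪ B → (∀ a ∈ A, ∀ b ∈ B, ⟪a, b⟫ = 0) →
    A = ∅ ∨ B = ∅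

/-- `x` is a positive root: it is a root which is a sum of simple roots
(with nonnegative integer multiplicities, encoded by a multiset of elements of `Δ`). -/
def IsPositiveRoot {V : Type*} [NormedAddCommGroup V] [InnerProductSpace ℝ V]
    (Φ : Set V) (Δ : Finset V) (x : V) : Prop :=
  x ∈ Φ ∧ ∃ m : Multiset V, (∀ a ∈ m, a ∈ Δ) ∧ x = m.sum

/-!
Let `ℓ` be a height function, i.e. a linear form equal to `1` on `Δ`. Then
`ℓ γ = ℓ β + t`, so `γ ≠ β`; as `γ` and `β` have the same length, `⟪γ, γ - β⟫ > 0`, hence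
`⟪γ, αᵢ⟫ > 0` for some `i`. Since `ℓ γ ≥ t ≥ 2`, also `γ ≠ αᵢ`, and strict Cauchy–Schwarz for
roots of equal length gives `0 < ⟨γ, αᵢ^∨⟩ < 2`. So `⟨γ, αᵢ^∨⟩ = 1`, and the reflection of `γ`
in `αᵢ` is the root `γ - αᵢ = β + ∑_{j ≠ i} αⱼ`.
-/

lemma LinearIndepOn.exists_linearMap_eq_one {K V : Type*} [DivisionRing K] [AddCommGroup V]
    [Module K V] {s : Set V} (hs : LinearIndepOn K id s) :
    ∃ ℓ : V →ₗ[K] K, ∀ x ∈ s, ℓ x = 1 :=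
  ⟨(Module.Basis.extend hs).sumCoords, fun x hx => by
    simpa [Module.Basis.extend_apply_self] using
      (Module.Basis.extend hs).sumCoords_self_apply (i := ⟨x, hs.subset_extend _ hx⟩)⟩

lemma map_multiset_sum_eq_card {K V : Type*} [Semiring K] [AddCommMonoid V] [Module K V]
    {s : Set V} {ℓ : V →ₗ[K] K} (hℓ : ∀ x ∈ s, ℓ x = 1) {m : Multiset V}
    (hm : ∀ a ∈ m, a ∈ s) : ℓ m.sum = m.card := by
  rw [map_multiset_sum, Multiset.map_congr rfl fun a ha => hℓ a (hm a ha)]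
  simp

lemma real_inner_lt_real_inner_self_of_ne {F : Type*} [NormedAddCommGroup F]
    [InnerProductSpace ℝ F] {x y : F} (h : ⟪x, x⟫ = ⟪y, y⟫) (hne : x ≠ y) : ⟪x, y⟫ < ⟪x, x⟫ := by
  have := real_inner_self_pos.2 (sub_ne_zero.2 hne)
  rw [inner_sub_left, inner_sub_right, inner_sub_right, real_inner_comm x y] at this
  linarith

namespace IsSimplyLacedIrreducibleRootSystem

variable {V : Type*} [NormedAddCommGroup V] [InnerProductSpace ℝ V] {Φ : Set V} {Δ : Finset V}

lemma pairing_eq_one_of_inner_pos (hRS : IsSimplyLacedIrreducibleRootSystem Φ Δ) {α γ : V}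
    (hα : α ∈ Φ) (hγ : γ ∈ Φ) (hpos : 0 < ⟪γ, α⟫) (hne : γ ≠ α) :
    2 * ⟪γ, α⟫ / ⟪α, α⟫ = 1 := by
  have hαα : 0 < ⟪α, α⟫ := real_inner_self_pos.2 (hRS.ne_zero α hα)
  have hlt : ⟪γ, α⟫ < ⟪α, α⟫ := by
    simpa [real_inner_comm] using
      real_inner_lt_real_inner_self_of_ne (hRS.simplyLaced α hα γ hγ) hne.symm
  obtain ⟨n, hn⟩ := hRS.crystallographic α hα γ hγ
  have hn0 : (0 : ℝ) < n := hn ▸ by positivity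
  have hn2 : (n : ℝ) < 2 := hn ▸ (div_lt_iff₀ hαα).2 (by linarith)
  have hn1 : n = 1 := by
    have : 0 < n := by exact_mod_cast hn0
    have : n < 2 := by exact_mod_cast hn2
    omega
  rw [← hn, hn1, Int.cast_one]

lemma sub_mem_of_inner_pos (hRS : IsSimplyLacedIrreducibleRootSystem Φ Δ) {α γ : V}
    (hα : α ∈ Φ) (hγ : γ ∈ Φ) (hpos : 0 < ⟪γ, α⟫) (hne : γ ≠ α) : γ - α ∈ Φ := by
  have := hRS.reflect_mem α hα γ hγ
  rwa [hRS.pairing_eq_one_of_inner_pos hα hγ hpos hne, one_smul] at this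

end IsSimplyLacedIrreducibleRootSystem

lemma IsPositiveRoot.of_eq_add_sum {V ι : Type*} [NormedAddCommGroup V] [InnerProductSpace ℝ V]
    {Φ : Set V} {Δ : Finset V} {β y : V} (hβ : IsPositiveRoot Φ Δ β) (hy : y ∈ Φ)
    {s : Finset ι} {f : ι → V} (hf : ∀ i ∈ s, f i ∈ Δ) (h : y = β + ∑ i ∈ s, f i) :
    IsPositiveRoot Φ Δ y := by
  obtain ⟨-, m, hm, rfl⟩ := hβ
  refine ⟨hy, m + s.val.map f, fun a ha => ?_,
    by rw [Multiset.sum_add, ← Finset.sum_eq_multiset_sum, h]⟩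
  rcases Multiset.mem_add.1 ha with ha | ha
  · exact hm a ha
  · obtain ⟨i, hi, rfl⟩ := Multiset.mem_map.1 ha
    exact hf i hi

/-- Induction step for chains of positive roots: if `β, γ` are positive roots with
`γ - β = α₁ + ⋯ + α_t` a sum of `t ≥ 2` simple roots, then for some index `i` we have
`⟨γ, αᵢ^∨⟩ = 1`, the element `γ - αᵢ` is a positive root, and `γ - αᵢ - β` is the sum
of the remaining simple roots. -/
theorem exists_simple_root_pairing_one
    {V : Type*} [NormedAddCommGroup V] [InnerProductSpace ℝ V]
    {Φ : Set V} {Δ : Finset V}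
    (hRS : IsSimplyLacedIrreducibleRootSystem Φ Δ)
    {β γ : V} (hβ : IsPositiveRoot Φ Δ β) (hγ : IsPositiveRoot Φ Δ γ)
    {t : ℕ} (ht : 2 ≤ t) (α : Fin t → V) (hα : ∀ i, α i ∈ Δ)
    (hsum : γ - β = ∑ i, α i) :
    ∃ i : Fin t,
      2 * ⟪γ, α i⟫ / ⟪α i, α i⟫ = 1 ∧
      IsPositiveRoot Φ Δ (γ - α i) ∧
      γ - α i - β = ∑ j ∈ Finset.univ.erase i, α j := by
  obtain ⟨ℓ, hℓ⟩ := LinearIndepOn.exists_linearMap_eq_one hRS.base_indep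
  have hℓγ : ℓ γ = ℓ β + t := by
    have : ℓ (γ - β) = ∑ i, ℓ (α i) := by rw [hsum, map_sum]
    simp only [map_sub, hℓ _ (hα _), Finset.sum_const, Finset.card_univ, Fintype.card_fin,
      nsmul_eq_mul, mul_one] at this
    linarith
  have hℓβ : 0 ≤ ℓ β := by
    obtain ⟨-, m, hm, rfl⟩ := hβ
    simp [map_multiset_sum_eq_card hℓ hm]
  have ht' : (2 : ℝ) ≤ t := by exact_mod_cast ht
  have hγβ : γ ≠ β := by rintro rfl; linarith
  obtain ⟨i, -, hi⟩ : ∃ i ∈ Finset.univ, 0 < ⟪γ, α i⟫ := by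
    refine Finset.exists_lt_of_sum_lt (f := fun _ => 0) ?_
    have := real_inner_lt_real_inner_self_of_ne (hRS.simplyLaced γ hγ.1 β hβ.1) hγβ
    rw [← inner_sum, ← hsum, inner_sub_right, Finset.sum_const_zero]
    linarith
  have hγα : γ ≠ α i := by
    rintro h
    have : ℓ γ = 1 := h ▸ hℓ _ (hα i)
    linarith
  have hαΦ := hRS.base_subset (hα i)
  have hrest : γ - α i - β = ∑ j ∈ Finset.univ.erase i, α j := by
    rw [sub_right_comm, hsum, ← Finset.add_sum_erase _ α (Finset.mem_univ i), add_sub_cancel_left]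
  exact ⟨i, hRS.pairing_eq_one_of_inner_pos hαΦ hγ.1 hi hγα,
    hβ.of_eq_add_sum (hRS.sub_mem_of_inner_pos hαΦ hγ.1 hi hγα) (fun j _ => hα j)
      (by rw [← hrest]; abel), hrest⟩
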